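/- arXiv:1312.0842 — 3 statements merged into one kernel-verified Lean document; each statement's English description precedes it below -/
import Mathlib

section
/- Let m ≥ 1 and suppose integers c_1, c_3, c_5, ..., c_{4m-1} (indexed by odd i with 1 ≤ i ≤ 4m-1) satisfy ∑_{i odd} c_i · 2^i · C(4m, i) = 0. Then c_1 is even. -/
/-!
Write `n = 2^k r` with `r` odd. From `i * C(n, i) = n * C(n - 1, i - 1)` and `i` odd, `2^k` divides
`C(n, i)`, so for odd `i ≥ 3` the term `2^i C(n, i)` is divisible by `2^(k + 3)`, whereas
`2^1 C(n, 1) = 2^(k + 1) r`. Reducing the relation modulo `2^(k + 3)` forces `4 ∣ c₁`.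
-/

theorem Nat.ordProj_dvd_choose_of_not_dvd {p n i : ℕ} (hp : p.Prime) (hi : ¬ p ∣ i) :
    ordProj[p] n ∣ n.choose i := by
  obtain ⟨i, rfl⟩ : ∃ i', i = i' + 1 := Nat.exists_eq_succ_of_ne_zero (by rintro rfl; simp at hi)
  rcases n with _ | n
  · simp
  have hdvd : ordProj[p] (n + 1) ∣ (n + 1).choose (i + 1) * (i + 1) := by
    rw [← Nat.add_one_mul_choose_eq]
    exact (Nat.ordProj_dvd _ _).mul_right _
  exact (((hp.coprime_iff_not_dvd.mpr hi).pow_left _)).dvd_of_dvd_mul_right hdvd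

theorem Nat.eight_mul_ordProj_two_dvd_two_pow_mul_choose {n i : ℕ} (hi : Odd i) (hi3 : 3 ≤ i) :
    8 * ordProj[2] n ∣ 2 ^ i * n.choose i := by
  have h8 : 8 ∣ 2 ^ i := by
    simpa using Nat.pow_dvd_pow 2 hi3
  exact Nat.mul_dvd_mul h8
    (Nat.ordProj_dvd_choose_of_not_dvd Nat.prime_two hi.not_two_dvd_nat)

theorem four_dvd_of_sum_two_pow_mul_choose_eq_zero {n : ℕ} (hn : n ≠ 0) {s : Finset ℕ}
    (hs : ∀ i ∈ s, Odd i) (h1 : 1 ∈ s) (c : ℕ → ℤ)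
    (h : ∑ i ∈ s, c i * 2 ^ i * (n.choose i : ℤ) = 0) :
    4 ∣ c 1 := by
  set q := ordProj[2] n
  set r := ordCompl[2] n
  have hrest : (8 * q : ℤ) ∣ ∑ i ∈ s.erase 1, c i * 2 ^ i * (n.choose i : ℤ) := by
    refine Finset.dvd_sum fun i hi => ?_
    obtain ⟨hi1, his⟩ := Finset.mem_erase.mp hi
    have hodd := hs i his
    have hi3 : 3 ≤ i := by obtain ⟨j, rfl⟩ := hodd; omega
    rw [mul_assoc]
    exact Dvd.dvd.mul_left (by exact_mod_cast
      Nat.eight_mul_ordProj_two_dvd_two_pow_mul_choose hodd hi3) _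
  have hfirst : (2 * q : ℤ) * 4 ∣ (2 * q : ℤ) * (c 1 * r) := by
    have hsplit := Finset.add_sum_erase s (fun i => c i * 2 ^ i * (n.choose i : ℤ)) h1
    have hn_eq : (n : ℤ) = q * r := by exact_mod_cast (Nat.ordProj_mul_ordCompl_eq_self n 2).symm
    have : (2 * q : ℤ) * (c 1 * r) = -∑ i ∈ s.erase 1, c i * 2 ^ i * (n.choose i : ℤ) := by
      simp only [Nat.choose_one_right, h, hn_eq] at hsplit
      linear_combination hsplit
    rw [this, dvd_neg, show (2 * q : ℤ) * 4 = 8 * q by ring]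
    exact hrest
  have hr : IsCoprime (4 : ℤ) r := by
    rw [show (4 : ℤ) = ((2 ^ 2 : ℕ) : ℤ) by norm_num, Nat.isCoprime_iff_coprime]
    exact (Nat.coprime_ordCompl Nat.prime_two hn).pow_left 2
  exact hr.dvd_of_dvd_mul_right
    ((mul_dvd_mul_iff_left (by have := Nat.ordProj_pos n 2; positivity)).mp hfirst)

theorem stmt2 (m : ℕ) (hm : 1 ≤ m) (c : ℕ → ℤ)
    (h : ∑ i ∈ (Finset.range (4 * m)).filter (fun i => Odd i),
      c i * 2 ^ i * (Nat.choose (4 * m) i : ℤ) = 0) :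
    2 ∣ c 1 := by
  have h1 : 1 ∈ (Finset.range (4 * m)).filter (fun i => Odd i) := by
    simp only [Finset.mem_filter, Finset.mem_range, odd_one, and_true]
    omega
  have h4 := four_dvd_of_sum_two_pow_mul_choose_eq_zero (by omega)
    (fun i hi => (Finset.mem_filter.mp hi).2) h1 c h
  exact dvd_trans (by norm_num) h4
end

section
/- Let m ≥ 3 and suppose integers c_1, c_3, ..., c_{2m-1} (indexed by odd i with 1 ≤ i ≤ 2m-1) satisfy ∑_{i odd, i ≤ 2m-2} c_i · 2^i · C(2m, i) + c_{2m-1} · 2^{2m-1} = 0. Then c_1 is even. -/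
/-!
Write `m = 2^k u` with `u` odd. The `i = 1` term is `c₁ · 2^(k+2) u`. Every other term is
divisible by `2^(k+3)`: for odd `i ≥ 3` because `2^(k+1) ∣ 2m` and `i` is odd force
`2^(k+1) ∣ C(2m, i)`, and the last one because `2^k ≤ m` makes `k + 3 ≤ 2m - 1`.
Hence `2^(k+3) ∣ c₁ · 2^(k+2) u`, so `c₁ u`, and therefore `c₁`, is even.
-/

-- From `i · C(n, i) = n · C(n - 1, i - 1)`.
theorem Nat.dvd_choose_of_dvd_of_coprime {d n i : ℕ} (hdn : d ∣ n) (hdi : d.Coprime i) :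
    d ∣ n.choose i := by
  rcases i with _ | j
  · simp [Nat.coprime_zero_right _ |>.mp hdi]
  rcases n with _ | n
  · simp
  refine hdi.dvd_of_dvd_mul_right ?_
  rw [← Nat.add_one_mul_choose_eq]
  exact hdn.mul_right _

theorem two_pow_add_three_dvd_two_pow_mul_choose {k m i : ℕ} (hkm : 2 ^ k ∣ m) (hi : Odd i)
    (hi1 : i ≠ 1) : 2 ^ (k + 3) ∣ 2 ^ i * (2 * m).choose i := by
  have hchoose : 2 ^ (k + 1) ∣ (2 * m).choose i :=
    Nat.dvd_choose_of_dvd_of_coprime (by rw [pow_succ']; exact mul_dvd_mul_left 2 hkm)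
      (Nat.Coprime.pow_left _ (Nat.coprime_two_left.mpr hi))
  have hi2 : 2 ≤ i := by obtain ⟨j, rfl⟩ := hi; omega
  rw [show k + 3 = 2 + (k + 1) by ring, pow_add]
  exact mul_dvd_mul (pow_dvd_pow 2 hi2) hchoose

theorem add_three_le_two_mul_sub_one {k m : ℕ} (hkm : 2 ^ k ∣ m) (hm : 3 ≤ m) :
    k + 3 ≤ 2 * m - 1 := by
  have hle : 2 ^ k ≤ m := Nat.le_of_dvd (by omega) hkm
  have hlt : k < 2 ^ k := Nat.lt_two_pow_self
  omega

theorem stmt3 (m : ℕ) (hm : 3 ≤ m) (c : ℕ → ℤ)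
    (h : ∑ i ∈ (Finset.range (2 * m - 1)).filter (fun i => Odd i),
        c i * 2 ^ i * (Nat.choose (2 * m) i : ℤ)
      + c (2 * m - 1) * 2 ^ (2 * m - 1) = 0) :
    2 ∣ c 1 := by
  obtain ⟨k, u, hu, hmu⟩ := Nat.exists_eq_two_pow_mul_odd (n := m) (by omega)
  have hkm : 2 ^ k ∣ m := ⟨u, hmu⟩
  set s := (Finset.range (2 * m - 1)).filter (fun i => Odd i)
  have h1 : 1 ∈ s := Finset.mem_filter.mpr ⟨Finset.mem_range.mpr (by omega), odd_one⟩
  have hterms :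
      (2 : ℤ) ^ (k + 3) ∣ ∑ i ∈ s.erase 1, c i * 2 ^ i * (Nat.choose (2 * m) i : ℤ) := by
    refine Finset.dvd_sum fun i hi => ?_
    obtain ⟨hi1, hi⟩ := Finset.mem_erase.mp hi
    have hterm := two_pow_add_three_dvd_two_pow_mul_choose hkm (Finset.mem_filter.mp hi).2 hi1
    rw [mul_assoc]
    exact Dvd.dvd.mul_left (by exact_mod_cast hterm) _
  have hlast : (2 : ℤ) ^ (k + 3) ∣ c (2 * m - 1) * 2 ^ (2 * m - 1) :=
    (pow_dvd_pow 2 (add_three_le_two_mul_sub_one hkm hm)).mul_left _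
  have hfirst : (2 : ℤ) ^ (k + 3) ∣ c 1 * 2 ^ 1 * (Nat.choose (2 * m) 1 : ℤ) := by
    refine (dvd_add_left (dvd_add hterms hlast)).mp ?_
    rw [← Finset.sum_erase_add s _ h1] at h
    rw [show c 1 * 2 ^ 1 * ((2 * m).choose 1 : ℤ) + _ = 0 by linarith]
    exact dvd_zero _
  have hfirst_eq : c 1 * 2 ^ 1 * ((2 * m).choose 1 : ℤ) = 2 ^ (k + 2) * (c 1 * u) := by
    rw [Nat.choose_one_right, hmu]; push_cast; ring
  rw [hfirst_eq, pow_succ, mul_dvd_mul_iff_left (by positivity)] at hfirst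
  exact (Int.prime_two.dvd_mul.mp hfirst).resolve_right
    fun h2 => hu.not_two_dvd_nat (by exact_mod_cast h2)
end

section
/- Let A ⊆ B be free abelian groups of finite rank with B/A finite. Let I and Ĩ be the augmentation ideals of Z[A] and Z[B] respectively. Then Z[A] ∩ Ĩ² = I². -/
/-- The augmentation map of the integral group ring `ℤ[A]`. -/
noncomputable def augMap (A : Type) [AddCommGroup A] :
    AddMonoidAlgebra ℤ A →ₐ[ℤ] ℤ :=
  AddMonoidAlgebra.lift ℤ ℤ A 1

/-- The augmentation ideal of `ℤ[A]`. -/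
noncomputable def augIdeal (A : Type) [AddCommGroup A] : Ideal (AddMonoidAlgebra ℤ A) :=
  RingHom.ker (augMap A).toRingHom

/-! An element `x = ∑ nₐ [a]` of `ℤ[A]` lies in `I²` iff both `∑ nₐ` and `∑ nₐ • a ∈ A` vanish.
The second map kills `I²` because it satisfies a Leibniz rule relative to the augmentation;
conversely `x ≡ δ(∑ nₐ • a) + (∑ nₐ) mod I²`, where `δ a = [a] - 1`. Both invariants are
compatible with `ℤ[A] → ℤ[B]` (the second through `ι`), so injectivity of `ι` gives the claim. -/

open AddMonoidAlgebra

namespace AugmentationIdeal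

variable {A B : Type} [AddCommGroup A] [AddCommGroup B]

@[simp]
lemma augMap_single (a : A) (n : ℤ) : augMap A (single a n) = n := by
  simp [augMap, lift_single]

lemma mem_augIdeal_iff (x : AddMonoidAlgebra ℤ A) : x ∈ augIdeal A ↔ augMap A x = 0 :=
  RingHom.mem_ker

lemma augMap_mapDomain (ι : A →+ B) (x : AddMonoidAlgebra ℤ A) :
    augMap B (mapDomainRingHom ℤ ι x) = augMap A x := by
  induction x using induction_linear with
  | zero => simp
  | add p q hp hq => rw [map_add, map_add, map_add, hp, hq]
  | single a n => simp [mapDomainRingHom_apply, mapDomain_single]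

variable (A) in
noncomputable def domainSum : AddMonoidAlgebra ℤ A →ₗ[ℤ] A :=
  Finsupp.linearCombination ℤ id ∘ₗ (coeffLinearEquiv ℤ).toLinearMap

@[simp]
lemma domainSum_single (a : A) (n : ℤ) : domainSum A (single a n) = n • a := by
  show Finsupp.linearCombination ℤ id (Finsupp.single a n) = n • a
  simp

lemma domainSum_mapDomain (ι : A →+ B) (x : AddMonoidAlgebra ℤ A) :
    domainSum B (mapDomainRingHom ℤ ι x) = ι (domainSum A x) := by
  induction x using induction_linear with
  | zero => simp
  | add p q hp hq => rw [map_add, map_add, map_add, hp, hq, map_add]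
  | single a n => simp [mapDomainRingHom_apply, mapDomain_single]

lemma domainSum_mul (x y : AddMonoidAlgebra ℤ A) :
    domainSum A (x * y) = augMap A x • domainSum A y + augMap A y • domainSum A x := by
  induction x using induction_linear with
  | zero => simp
  | add p q hp hq => simp only [add_mul, map_add, hp, hq]; module
  | single a n =>
    induction y using induction_linear with
    | zero => simp
    | add p q hp hq => simp only [mul_add, map_add, hp, hq]; module
    | single b m => simp only [single_mul_single, domainSum_single, augMap_single]; module

lemma domainSum_eq_zero_of_mem_augIdeal_sq {x : AddMonoidAlgebra ℤ A}
    (hx : x ∈ augIdeal A ^ 2) : domainSum A x = 0 := by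
  rw [pow_two] at hx
  refine Submodule.mul_induction_on hx (fun p hp q hq => ?_) (fun p q hp hq => ?_)
  · simp [domainSum_mul, (mem_augIdeal_iff p).1 hp, (mem_augIdeal_iff q).1 hq]
  · rw [map_add, hp, hq, add_zero]

lemma single_one_sub_one_mem_augIdeal (a : A) :
    single a 1 - 1 ∈ augIdeal A := by
  simp [mem_augIdeal_iff]

variable (A) in
-- Additive because `[a + b] - 1 - ([a] - 1) - ([b] - 1) = ([a] - 1)([b] - 1)`.
noncomputable def delta : A →+ AddMonoidAlgebra ℤ A ⧸ augIdeal A ^ 2 where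
  toFun a := Ideal.Quotient.mk _ (single a 1 - 1)
  map_zero' := by simp [one_def]
  map_add' a b := by
    rw [← map_add, Ideal.Quotient.mk_eq_mk_iff_sub_mem, pow_two]
    convert Ideal.mul_mem_mul (single_one_sub_one_mem_augIdeal a)
      (single_one_sub_one_mem_augIdeal b) using 1
    simp only [sub_mul, mul_sub, one_def, single_mul_single, mul_one]
    abel_nf

lemma mk_augIdeal_sq_eq (x : AddMonoidAlgebra ℤ A) :
    Ideal.Quotient.mk (augIdeal A ^ 2) x =
      delta A (domainSum A x) + augMap A x • Ideal.Quotient.mk (augIdeal A ^ 2) 1 := by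
  induction x using induction_linear with
  | zero => simp
  | add p q hp hq => simp only [map_add, hp, hq]; module
  | single a n =>
    have hsingle : single a n = n • (single a 1 - 1) + n • (1 : AddMonoidAlgebra ℤ A) := by
      rw [smul_sub, sub_add_cancel, smul_single, smul_eq_mul, mul_one]
    rw [domainSum_single, augMap_single, map_zsmul, hsingle, map_add, map_zsmul, map_zsmul]
    rfl

theorem mem_augIdeal_sq_iff (x : AddMonoidAlgebra ℤ A) :
    x ∈ augIdeal A ^ 2 ↔ augMap A x = 0 ∧ domainSum A x = 0 := by
  refine ⟨fun hx => ⟨?_, domainSum_eq_zero_of_mem_augIdeal_sq hx⟩, fun ⟨h₁, h₂⟩ => ?_⟩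
  · exact (mem_augIdeal_iff x).1 (Ideal.pow_le_self two_ne_zero hx)
  · rw [← Ideal.Quotient.eq_zero_iff_mem, mk_augIdeal_sq_eq, h₁, h₂, map_zero, zero_smul, add_zero]

end AugmentationIdeal

open AugmentationIdeal in
theorem stmt11_general (A B : Type) [AddCommGroup A] [AddCommGroup B]
    (ι : A →+ B) (hι : Function.Injective ι) :
    Ideal.comap (AddMonoidAlgebra.mapDomainRingHom ℤ ι) ((augIdeal B) ^ 2)
      = (augIdeal A) ^ 2 := by
  ext x
  rw [Ideal.mem_comap, mem_augIdeal_sq_iff, mem_augIdeal_sq_iff, augMap_mapDomain,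
    domainSum_mapDomain, map_eq_zero_iff ι hι]

theorem stmt11 (A B : Type) [AddCommGroup A] [AddCommGroup B]
    [Module.Free ℤ A] [Module.Finite ℤ A] [Module.Free ℤ B] [Module.Finite ℤ B]
    (ι : A →+ B) (hι : Function.Injective ι) (hfin : Finite (B ⧸ ι.range)) :
    Ideal.comap (AddMonoidAlgebra.mapDomainRingHom ℤ ι) ((augIdeal B) ^ 2)
      = (augIdeal A) ^ 2 :=
  stmt11_general A B ι hι
end
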